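/- Let Y be a measurable space, μ₀ a probability measure on Y, and {K_x : x ∈ 𝒳} a family of Markov kernels from Y to Y indexed by a set 𝒳. Let D = (x₁,…,x_n) and D′ = (x′₁,…,x′_n) be two sequences in 𝒳ⁿ with x_t = x′_t for all t ≠ i and x_i ≠ x′_i, for some i ∈ {1,…,n}. Then for every γ ≥ 1, E_γ(μ₀K_{x₁}⋯K_{x_n} ‖ μ₀K_{x′₁}⋯K_{x′_n}) ≤ E_γ(μ_{i−1}K_{x_i} ‖ μ_{i−1}K_{x′_i}) · ∏_{t=i+1}^{n} η_γ(K_{x_t}), where μ_{i−1} := μ₀K_{x₁}⋯K_{x_{i−1}}. -/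

import Mathlib

open MeasureTheory ProbabilityTheory Real

noncomputable def Egamma {Y : Type*} [MeasurableSpace Y] (γ : ℝ) (P Q : Measure Y) : ℝ :=
  ⨆ A : {A : Set Y // MeasurableSet A}, ((P A.1).toReal - γ * (Q A.1).toReal)

noncomputable def etaGamma {Y : Type*} [MeasurableSpace Y] (γ : ℝ) (K : Kernel Y Y) : ℝ :=
  ⨆ p : {p : Measure Y × Measure Y //
      IsProbabilityMeasure p.1 ∧ IsProbabilityMeasure p.2 ∧ Egamma γ p.1 p.2 ≠ 0},
    Egamma γ (p.1.1.bind K) (p.1.2.bind K) / Egamma γ p.1.1 p.1.2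

/-- `runKernels μ [K₁, …, Kₙ] = μK₁⋯Kₙ`. -/
noncomputable def runKernels {Y : Type*} [MeasurableSpace Y]
    (μ : Measure Y) (Ks : List (Kernel Y Y)) : Measure Y :=
  Ks.foldl (fun ν K => ν.bind K) μ

/-! The chains for `D` and `D'` agree before step `i` and after it, so both outputs arise by
running the same kernels `K_{x_{i+1}}, …, K_{x_n}` from the two laws obtained after step `i`.
Each of these kernels `K` contracts `E_γ` by the factor `η_γ(K)`, which lies in `[0, 1]` by the
data-processing inequality; that inequality holds because the supremum over sets defining `E_γ`
also dominates the supremum over `[0, 1]`-valued test functions. -/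

section Egamma

variable {Y : Type*} [MeasurableSpace Y] {γ : ℝ} {P Q : Measure Y} [IsFiniteMeasure P]
  [IsFiniteMeasure Q]

theorem bddAbove_Egamma_range :
    BddAbove (Set.range fun A : {A : Set Y // MeasurableSet A} =>
      (P A.1).toReal - γ * (Q A.1).toReal) := by
  refine ⟨P.real Set.univ + |γ| * Q.real Set.univ, ?_⟩
  rintro _ ⟨A, rfl⟩
  have hP : P.real A.1 ≤ P.real Set.univ := measureReal_mono (Set.subset_univ _)
  have hQ : |γ| * Q.real A.1 ≤ |γ| * Q.real Set.univ :=
    mul_le_mul_of_nonneg_left (measureReal_mono (Set.subset_univ _)) (abs_nonneg γ)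
  have hγ : -(γ * Q.real A.1) ≤ |γ| * Q.real A.1 := by
    rw [← neg_mul]; exact mul_le_mul_of_nonneg_right (neg_le_abs γ) measureReal_nonneg
  change P.real A.1 - γ * Q.real A.1 ≤ _
  linarith

theorem measureReal_sub_le_Egamma {A : Set Y} (hA : MeasurableSet A) :
    P.real A - γ * Q.real A ≤ Egamma γ P Q :=
  le_ciSup bddAbove_Egamma_range ⟨A, hA⟩

theorem Egamma_nonneg : 0 ≤ Egamma γ P Q := by
  simpa using measureReal_sub_le_Egamma (γ := γ) (P := P) (Q := Q) MeasurableSet.empty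

/-- The supremum over sets also bounds the supremum over `[0, 1]`-valued tests: with densities
`p, q` with respect to `P + Q`, the integrand `(p - γ q) f` is at most the positive part of
`p - γ q`, whose integral is attained on the set `{γ q ≤ p}`. -/
theorem integral_sub_mul_integral_le_Egamma {f : Y → ℝ} (hf : Measurable f)
    (hf0 : ∀ y, 0 ≤ f y) (hf1 : ∀ y, f y ≤ 1) :
    ∫ y, f y ∂P - γ * ∫ y, f y ∂Q ≤ Egamma γ P Q := by
  set ν := P + Q
  have hPν : P ≪ ν := Measure.absolutelyContinuous_of_le (Measure.le_add_right le_rfl)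
  have hQν : Q ≪ ν := Measure.absolutelyContinuous_of_le (Measure.le_add_left le_rfl)
  set p : Y → ℝ := fun y => (P.rnDeriv ν y).toReal
  set q : Y → ℝ := fun y => (Q.rnDeriv ν y).toReal
  set g : Y → ℝ := fun y => p y - γ * q y
  have hg : Integrable g ν :=
    Measure.integrable_toReal_rnDeriv.sub (Measure.integrable_toReal_rnDeriv.const_mul γ)
  have hf_bdd : ∀ᵐ y ∂ν, ‖f y‖ ≤ 1 :=
    ae_of_all _ fun y => by rw [norm_of_nonneg (hf0 y)]; exact hf1 y
  have integral_eq (ρ : Measure Y) [IsFiniteMeasure ρ] (hρ : ρ ≪ ν) :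
      ∫ y, f y ∂ρ = ∫ y, (ρ.rnDeriv ν y).toReal * f y ∂ν := by
    simp_rw [← smul_eq_mul, integral_rnDeriv_smul hρ]
  set B : Set Y := {y | 0 ≤ g y}
  have hB : MeasurableSet B := measurableSet_le measurable_const
    (((Measure.measurable_rnDeriv P ν).ennreal_toReal).sub
      (((Measure.measurable_rnDeriv Q ν).ennreal_toReal).const_mul γ))
  calc ∫ y, f y ∂P - γ * ∫ y, f y ∂Q = ∫ y, g y * f y ∂ν := by
        rw [integral_eq P hPν, integral_eq Q hQν, ← integral_const_mul,
          ← integral_sub (Measure.integrable_toReal_rnDeriv.mul_bdd hf.aestronglyMeasurable hf_bdd)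
            ((Measure.integrable_toReal_rnDeriv.mul_bdd hf.aestronglyMeasurable hf_bdd).const_mul γ)]
        simp only [g]
        congr 1
        funext y
        ring
    _ ≤ ∫ y, B.indicator g y ∂ν := by
        refine integral_mono (hg.mul_bdd hf.aestronglyMeasurable hf_bdd) (hg.indicator hB)
          fun y => ?_
        by_cases hy : y ∈ B
        · rw [Set.indicator_of_mem hy]
          exact mul_le_of_le_one_right hy (hf1 y)
        · rw [Set.indicator_of_notMem hy]
          exact mul_nonpos_of_nonpos_of_nonneg (le_of_lt (not_le.mp hy)) (hf0 y)
    _ = P.real B - γ * Q.real B := by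
        rw [integral_indicator hB, integral_sub Measure.integrable_toReal_rnDeriv.integrableOn
          (Measure.integrable_toReal_rnDeriv.const_mul γ).integrableOn, integral_const_mul,
          Measure.setIntegral_toReal_rnDeriv hPν, Measure.setIntegral_toReal_rnDeriv hQν]
    _ ≤ Egamma γ P Q := measureReal_sub_le_Egamma hB

theorem Egamma_bind_le (K : Kernel Y Y) [IsMarkovKernel K] :
    Egamma γ (P.bind K) (Q.bind K) ≤ Egamma γ P Q := by
  refine ciSup_le fun ⟨A, hA⟩ => ?_
  have bind_eq (ρ : Measure Y) : (ρ.bind K A).toReal = ∫ y, (K y A).toReal ∂ρ := by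
    rw [Measure.bind_apply hA K.measurable.aemeasurable,
      integral_toReal (K.measurable_coe hA).aemeasurable (ae_of_all _ fun _ => measure_lt_top _ _)]
  rw [bind_eq, bind_eq]
  exact integral_sub_mul_integral_le_Egamma (K.measurable_coe hA).ennreal_toReal
    (fun _ => ENNReal.toReal_nonneg) fun _ => measureReal_le_one

end Egamma

section etaGamma

variable {Y : Type*} [MeasurableSpace Y] {γ : ℝ} (K : Kernel Y Y) [IsMarkovKernel K]

theorem etaGamma_nonneg : 0 ≤ etaGamma γ K :=
  Real.iSup_nonneg fun ⟨_, hP, hQ, _⟩ =>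
    have := hP; have := hQ; div_nonneg Egamma_nonneg Egamma_nonneg

theorem Egamma_bind_div_le_etaGamma (P Q : Measure Y) [IsProbabilityMeasure P]
    [IsProbabilityMeasure Q] (h : Egamma γ P Q ≠ 0) :
    Egamma γ (P.bind K) (Q.bind K) / Egamma γ P Q ≤ etaGamma γ K := by
  refine le_ciSup (f := fun p : {p : Measure Y × Measure Y //
      IsProbabilityMeasure p.1 ∧ IsProbabilityMeasure p.2 ∧ Egamma γ p.1 p.2 ≠ 0} =>
    Egamma γ (p.1.1.bind K) (p.1.2.bind K) / Egamma γ p.1.1 p.1.2) ⟨1, ?_⟩ ⟨(P, Q), ‹_›, ‹_›, h⟩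
  rintro _ ⟨⟨_, hP', hQ', _⟩, rfl⟩
  exact div_le_one_of_le₀ (Egamma_bind_le K) Egamma_nonneg

theorem Egamma_bind_le_etaGamma_mul (P Q : Measure Y) [IsProbabilityMeasure P]
    [IsProbabilityMeasure Q] :
    Egamma γ (P.bind K) (Q.bind K) ≤ etaGamma γ K * Egamma γ P Q := by
  by_cases h : Egamma γ P Q = 0
  · simpa [h] using Egamma_bind_le (γ := γ) (P := P) (Q := Q) K
  · exact (div_le_iff₀ (Egamma_nonneg.lt_of_ne' h)).mp (Egamma_bind_div_le_etaGamma K P Q h)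

end etaGamma

section runKernels

variable {Y : Type*} [MeasurableSpace Y]

theorem runKernels_append (μ : Measure Y) (L₁ L₂ : List (Kernel Y Y)) :
    runKernels μ (L₁ ++ L₂) = runKernels (runKernels μ L₁) L₂ := by
  simp [runKernels]

theorem isProbabilityMeasure_runKernels (μ : Measure Y) [IsProbabilityMeasure μ]
    (L : List (Kernel Y Y)) (hL : ∀ κ ∈ L, IsMarkovKernel κ) :
    IsProbabilityMeasure (runKernels μ L) := by
  induction L generalizing μ with
  | nil => assumption
  | cons κ L ih =>
    have := hL κ List.mem_cons_self
    exact ih (μ.bind κ) fun κ' h => hL κ' (List.mem_cons_of_mem κ h)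

theorem Egamma_runKernels_le (γ : ℝ) (P Q : Measure Y) [IsProbabilityMeasure P]
    [IsProbabilityMeasure Q] (L : List (Kernel Y Y)) (hL : ∀ κ ∈ L, IsMarkovKernel κ) :
    Egamma γ (runKernels P L) (runKernels Q L) ≤ Egamma γ P Q * (L.map (etaGamma γ)).prod := by
  induction L generalizing P Q with
  | nil => simp [runKernels]
  | cons κ L ih =>
    have := hL κ List.mem_cons_self
    have hη : 0 ≤ (L.map (etaGamma γ)).prod := List.prod_nonneg fun η hη => by
      obtain ⟨κ', hκ', rfl⟩ := List.mem_map.mp hη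
      have := hL κ' (List.mem_cons_of_mem κ hκ')
      exact etaGamma_nonneg κ'
    calc Egamma γ (runKernels P (κ :: L)) (runKernels Q (κ :: L))
        ≤ Egamma γ (P.bind κ) (Q.bind κ) * (L.map (etaGamma γ)).prod :=
          ih (P.bind κ) (Q.bind κ) fun κ' h => hL κ' (List.mem_cons_of_mem κ h)
      _ ≤ etaGamma γ κ * Egamma γ P Q * (L.map (etaGamma γ)).prod :=
          mul_le_mul_of_nonneg_right (Egamma_bind_le_etaGamma_mul κ P Q) hη
      _ = Egamma γ P Q * ((κ :: L).map (etaGamma γ)).prod := by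
          rw [List.map_cons, List.prod_cons]; ring

end runKernels

theorem List.ofFn_eq_take_append_cons_drop {α : Type*} {n : ℕ} (f g : Fin n → α) (i : Fin n)
    (h : ∀ t, t ≠ i → f t = g t) :
    List.ofFn g = (List.ofFn f).take i ++ g i :: (List.ofFn f).drop (i + 1) := by
  have : List.ofFn g = (List.ofFn f).set i (g i) := by
    refine List.ext_getElem (by simp) fun t h₁ h₂ => ?_
    rw [List.getElem_set]
    split_ifs with ht
    · simp [← ht]
    · simpa using (h ⟨t, by simpa using h₂⟩ (fun e => ht (by simp [← e]))).symm
  rw [this, List.set_eq_take_append_cons_drop, if_pos (by simp)]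

theorem List.prod_drop_ofFn {M : Type*} [CommMonoid M] {n : ℕ} (f : Fin n → M) (k : ℕ) :
    ((List.ofFn f).drop k).prod = ∏ j with k ≤ j.val, f j := by
  induction n generalizing k with
  | zero => simp
  | succ n ih =>
    cases k with
    | zero => simp [List.prod_ofFn, Fin.prod_univ_succ]
    | succ k =>
      rw [List.ofFn_succ, List.drop_succ_cons, ih, Finset.prod_filter, Finset.prod_filter,
        Fin.prod_univ_succ]
      simp

theorem Egamma_iterative_sdpi_general {Y 𝒳 : Type*} [MeasurableSpace Y]
    (μ₀ : Measure Y) [IsProbabilityMeasure μ₀]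
    (K : 𝒳 → Kernel Y Y) [∀ x, IsMarkovKernel (K x)]
    (n : ℕ) (D D' : Fin n → 𝒳) (i : Fin n)
    (heq : ∀ t, t ≠ i → D t = D' t)
    (γ : ℝ) :
    Egamma γ (runKernels μ₀ (List.ofFn fun t => K (D t)))
        (runKernels μ₀ (List.ofFn fun t => K (D' t)))
      ≤ Egamma γ
          ((runKernels μ₀ ((List.ofFn fun t => K (D t)).take i.val)).bind (K (D i)))
          ((runKernels μ₀ ((List.ofFn fun t => K (D t)).take i.val)).bind (K (D' i)))
        * ∏ t ∈ Finset.univ.filter (fun t => i < t), etaGamma γ (K (D t)) := by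
  set L := List.ofFn fun t => K (D t)
  set S := L.drop (i + 1)
  have hL : ∀ κ ∈ L, IsMarkovKernel κ := fun κ hκ => by
    obtain ⟨t, rfl⟩ := List.mem_ofFn.mp hκ
    infer_instance
  have := isProbabilityMeasure_runKernels μ₀ (L.take i) fun κ hκ => hL κ (List.mem_of_mem_take hκ)
  have hD : L = L.take i ++ K (D i) :: S := List.ofFn_eq_take_append_cons_drop _ _ i fun _ _ => rfl
  have hD' : List.ofFn (fun t => K (D' t)) = L.take i ++ K (D' i) :: S :=
    List.ofFn_eq_take_append_cons_drop _ _ i fun t ht => by rw [heq t ht]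
  have hη : (S.map (etaGamma γ)).prod = ∏ t with i < t, etaGamma γ (K (D t)) := by
    rw [List.map_drop, List.map_ofFn, List.prod_drop_ofFn]
    rfl
  calc _ = Egamma γ (runKernels ((runKernels μ₀ (L.take i)).bind (K (D i))) S)
        (runKernels ((runKernels μ₀ (L.take i)).bind (K (D' i))) S) := by
        conv_lhs => rw [hD, hD', runKernels_append, runKernels_append]
        rfl
    _ ≤ _ := Egamma_runKernels_le γ _ _ S fun κ hκ => hL κ (List.mem_of_mem_drop hκ)
    _ = _ := by rw [hη]

/-- For a family of Markov kernels `{K_x}` and neighboring datasets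
`D, D'` differing only at coordinate `i`,
`E_γ(μ₀K_{x₁}⋯K_{xₙ} ‖ μ₀K_{x'₁}⋯K_{x'ₙ})
  ≤ E_γ(μ_{i−1}K_{x_i} ‖ μ_{i−1}K_{x'_i}) · ∏_{t>i} η_γ(K_{x_t})`,
where `μ_{i−1} = μ₀K_{x₁}⋯K_{x_{i−1}}`. -/
theorem Egamma_iterative_sdpi {Y 𝒳 : Type*} [MeasurableSpace Y]
    (μ₀ : Measure Y) [IsProbabilityMeasure μ₀]
    (K : 𝒳 → Kernel Y Y) [∀ x, IsMarkovKernel (K x)]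
    (n : ℕ) (D D' : Fin n → 𝒳) (i : Fin n)
    (hne : D i ≠ D' i) (heq : ∀ t, t ≠ i → D t = D' t)
    (γ : ℝ) (hγ : 1 ≤ γ) :
    Egamma γ (runKernels μ₀ (List.ofFn fun t => K (D t)))
        (runKernels μ₀ (List.ofFn fun t => K (D' t)))
      ≤ Egamma γ
          ((runKernels μ₀ ((List.ofFn fun t => K (D t)).take i.val)).bind (K (D i)))
          ((runKernels μ₀ ((List.ofFn fun t => K (D t)).take i.val)).bind (K (D' i)))
        * ∏ t ∈ Finset.univ.filter (fun t => i < t), etaGamma γ (K (D t)) :=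
  Egamma_iterative_sdpi_general μ₀ K n D D' i heq γ
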